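/- arXiv:1308.1213 — 7 statements merged into one kernel-verified Lean document; each statement's English description precedes it below -/
import Mathlib

section
/- Let a : ℝ → ℝ be continuous and b, c : ℝ → ℝ be continuously differentiable with b(t)c(t) > 0 for all t ≥ 0. Fix v₁(0) > 0 and define v₁(t) = exp(−2∫₀ᵗ a(s) ds) · (b(t)c(0))/(c(t)b(0)) · v₁(0) and v₂(t) = √(b(t)c(t)v₁(t)). Then v₁(t) > 0 and v₂(t) > 0 for all t ≥ 0, and for every continuous input u : ℝ → ℝ, if p solves ṗ = a(t)p + b(t)u(t) with p(0) = 0 and x solves ẋ = −(v̇₁(t)/(2v₁(t)))x + (v₂(t)/√v₁(t))u(t) with x(0) = 0, then the outputs coincide: (v₂(t)/√v₁(t))·x(t) = c(t)·p(t) for all t ≥ 0. (Proposition 1, sufficiency: the time-varying capacitor–transformer circuit exactly implements the input-output map of the first-order linear time-varying system.) -/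
open intervalIntegral

/-! With `g = √(b c)`, the output gain `v₂ / √v₁` equals `g`, and the choice of `v₁` makes
`-v̇₁ / (2 v₁) = a - ḃ / (2 b) + ċ / (2 c)`. A short computation with `g² = b c` then shows that
the rescaled state `(g / c) x` obeys the same equation `ż = a z + b u`, `z(0) = 0`, as `p`; by
uniqueness (integrating factor `exp (-∫ a)`) it equals `p`, so `g x = c p`. -/

theorem eq_of_hasDerivAt_linear {a f z₁ z₂ : ℝ → ℝ} {t₀ : ℝ} (ha : Continuous a)
    (h₁ : ∀ t ≥ t₀, HasDerivAt z₁ (a t * z₁ t + f t) t)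
    (h₂ : ∀ t ≥ t₀, HasDerivAt z₂ (a t * z₂ t + f t) t) (h₀ : z₁ t₀ = z₂ t₀) :
    ∀ t ≥ t₀, z₁ t = z₂ t := by
  set ψ : ℝ → ℝ := fun s => (z₁ s - z₂ s) * Real.exp (-∫ r in t₀..s, a r)
  have hψ : ∀ s ≥ t₀, HasDerivAt ψ 0 s := by
    intro s hs
    have hA := (ha.integral_hasStrictDerivAt t₀ s).hasDerivAt
    have hψ' : HasDerivAt ψ _ s := ((h₁ s hs).sub (h₂ s hs)).mul hA.neg.exp
    convert hψ' using 1
    simp only [Pi.sub_apply, Pi.neg_apply]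
    ring
  intro t ht
  have hconst : ψ t = ψ t₀ :=
    constant_of_has_deriv_right_zero
      (fun s hs => (hψ s hs.1).continuousAt.continuousWithinAt)
      (fun s hs => (hψ s hs.1).hasDerivWithinAt) t ⟨ht, le_rfl⟩
  simpa [ψ, h₀, Real.exp_ne_zero, sub_eq_zero] using hconst

theorem exp_mul_mul_div_mul_mul_pos {e B C B₀ C₀ κ : ℝ} (h : 0 < B * C) (h₀ : 0 < B₀ * C₀)
    (hκ : 0 < κ) : 0 < Real.exp e * (B * C₀) / (C * B₀) * κ := by
  have hratio : 0 < B * C₀ / (C * B₀) :=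
    div_pos_iff.2 (mul_pos_iff.1 (by linarith [mul_pos h h₀]))
  rw [mul_div_assoc]
  exact mul_pos (mul_pos (Real.exp_pos e) hratio) hκ

theorem hasDerivAt_of_eq_exp_mul_div_mul {v A b c : ℝ → ℝ} {α b' c' t β γ κ : ℝ}
    (hv : ∀ s, v s = Real.exp (-2 * A s) * (b s * β) / (c s * γ) * κ)
    (hA : HasDerivAt A α t) (hb : HasDerivAt b b' t) (hc : HasDerivAt c c' t)
    (hbt : b t ≠ 0) (hct : c t ≠ 0) (hγ : γ ≠ 0) :
    HasDerivAt v (v t * (-2 * α + b' / b t - c' / c t)) t := by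
  rw [funext hv]
  have hv' : HasDerivAt (fun s => Real.exp (-2 * A s) * (b s * β) / (c s * γ) * κ) _ t :=
    ((((hA.const_mul (-2)).exp.mul (hb.mul_const β)).div (hc.mul_const γ)
      (mul_ne_zero hct hγ)).mul_const κ)
  convert hv' using 1
  simp only [Pi.mul_apply]
  field_simp

theorem hasDerivAt_sqrt_mul_div_mul {b c x : ℝ → ℝ} {α b' c' u t : ℝ}
    (hb : HasDerivAt b b' t) (hc : HasDerivAt c c' t) (hbc : 0 < b t * c t)
    (hx : HasDerivAt x
      ((α - b' / (2 * b t) + c' / (2 * c t)) * x t + Real.sqrt (b t * c t) * u) t) :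
    HasDerivAt (fun s => Real.sqrt (b s * c s) / c s * x s)
      (α * (Real.sqrt (b t * c t) / c t * x t) + b t * u) t := by
  have hbt : b t ≠ 0 := left_ne_zero_of_mul hbc.ne'
  have hct : c t ≠ 0 := right_ne_zero_of_mul hbc.ne'
  have hsq : Real.sqrt (b t * c t) ^ 2 = b t * c t := Real.sq_sqrt hbc.le
  have hy : HasDerivAt (fun s => Real.sqrt (b s * c s) / c s * x s) _ t :=
    (((hb.mul hc).sqrt hbc.ne').div hc hct).mul hx
  convert hy using 1
  simp only [Pi.mul_apply, Pi.div_apply]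
  field_simp
  linear_combination
    (c t * x t * b' + b t * x t * c' - 2 * b t * c t * Real.sqrt (b t * c t) * u) * hsq

/-- Proposition 1 (sufficiency): with the nonlinear inputs
`v₁(t) = e^{−2∫₀ᵗ a}·(b(t)c(0))/(c(t)b(0))·v₁(0)` and `v₂(t) = √(b(t)c(t)v₁(t))`, the
time-varying capacitor–transformer circuit `ẋ = −(v̇₁/(2v₁))x + (v₂/√v₁)u`, `x(0) = 0`, exactly
implements the input-output map of `ṗ = a(t)p + b(t)u`, `y = c(t)p`, `p(0) = 0`: the nonlinear
inputs are positive and `(v₂(t)/√v₁(t))·x(t) = c(t)·p(t)` for all `t ≥ 0`. -/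
theorem capacitor_transformer_implements_linear_system
    (a b c : ℝ → ℝ)
    (ha : Continuous a) (hb : ContDiff ℝ 1 b) (hc : ContDiff ℝ 1 c)
    (hbc : ∀ t ≥ (0:ℝ), b t * c t > 0)
    (v₁0 : ℝ) (hv₁0 : 0 < v₁0)
    (v₁ v₂ : ℝ → ℝ)
    (hv₁ : ∀ t, v₁ t
      = Real.exp (-2 * ∫ s in (0:ℝ)..t, a s) * (b t * c 0) / (c t * b 0) * v₁0)
    (hv₂ : ∀ t, v₂ t = Real.sqrt (b t * c t * v₁ t)) :
    (∀ t ≥ (0:ℝ), 0 < v₁ t ∧ 0 < v₂ t) ∧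
    (∀ u p x : ℝ → ℝ, Continuous u →
      p 0 = 0 → x 0 = 0 →
      (∀ t ≥ (0:ℝ), HasDerivAt p (a t * p t + b t * u t) t) →
      (∀ t ≥ (0:ℝ), HasDerivAt x
        (-(deriv v₁ t / (2 * v₁ t)) * x t + (v₂ t / Real.sqrt (v₁ t)) * u t) t) →
      ∀ t ≥ (0:ℝ), (v₂ t / Real.sqrt (v₁ t)) * x t = c t * p t) := by
  have hbt : ∀ t ≥ (0:ℝ), b t ≠ 0 := fun t ht => left_ne_zero_of_mul (hbc t ht).ne'
  have hct : ∀ t ≥ (0:ℝ), c t ≠ 0 := fun t ht => right_ne_zero_of_mul (hbc t ht).ne'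
  have hv₁pos : ∀ t ≥ (0:ℝ), 0 < v₁ t := fun t ht =>
    hv₁ t ▸ exp_mul_mul_div_mul_mul_pos (hbc t ht) (hbc 0 le_rfl) hv₁0
  have hv₂pos : ∀ t ≥ (0:ℝ), 0 < v₂ t := fun t ht =>
    hv₂ t ▸ Real.sqrt_pos.2 (mul_pos (hbc t ht) (hv₁pos t ht))
  refine ⟨fun t ht => ⟨hv₁pos t ht, hv₂pos t ht⟩, ?_⟩
  have hout : ∀ t ≥ (0:ℝ), v₂ t / Real.sqrt (v₁ t) = Real.sqrt (b t * c t) := fun t ht => by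
    rw [hv₂ t, Real.sqrt_mul (hbc t ht).le,
      mul_div_cancel_right₀ _ (Real.sqrt_pos.2 (hv₁pos t ht)).ne']
  have hb' (t : ℝ) : HasDerivAt b (deriv b t) t := (hb.differentiable one_ne_zero t).hasDerivAt
  have hc' (t : ℝ) : HasDerivAt c (deriv c t) t := (hc.differentiable one_ne_zero t).hasDerivAt
  have hcoef : ∀ t ≥ (0:ℝ), -(deriv v₁ t / (2 * v₁ t))
      = a t - deriv b t / (2 * b t) + deriv c t / (2 * c t) := fun t ht => by
    have hv₁' := hasDerivAt_of_eq_exp_mul_div_mul hv₁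
      (ha.integral_hasStrictDerivAt 0 t).hasDerivAt (hb' t) (hc' t) (hbt t ht) (hct t ht)
      (hbt 0 le_rfl)
    rw [hv₁'.deriv]
    field_simp [(hv₁pos t ht).ne', hbt t ht, hct t ht]
    ring
  intro u p x _ hp0 hx0 hp hx t ht
  have hy : ∀ s ≥ (0:ℝ), HasDerivAt (fun s => Real.sqrt (b s * c s) / c s * x s)
      (a s * (Real.sqrt (b s * c s) / c s * x s) + b s * u s) s := fun s hs =>
    hasDerivAt_sqrt_mul_div_mul (hb' s) (hc' s) (hbc s hs) <| by
      rw [← hcoef s hs, ← hout s hs]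
      exact hx s hs
  have hyp := eq_of_hasDerivAt_linear ha hy hp (by simp [hx0, hp0]) t ht
  rw [hout t ht, ← hyp]
  field_simp [hct t ht]
end

section
/- Let Σ(t) be positive definite symmetric and differentiable, P(t) invertible and differentiable, J(t) skew-symmetric, R(t) symmetric, g(t) ∈ ℝⁿˣᵏ, all continuous in t, and let x solve ẋ = (J(t) − R(t))Σ(t)x + g(t)u(t). Define x̃(t) = P(t)x(t), Σ̃ = P⁻ᵀ Σ P⁻¹, A = P J Pᵀ + Ṗ Σ⁻¹ Pᵀ, J̃ = (A − Aᵀ)/2, M̃ = (A + Aᵀ)/2, g̃ = P g and R̃ = P R Pᵀ. Then x̃ solves dx̃/dt = (J̃(t) + M̃(t) − R̃(t)) Σ̃(t) x̃ + g̃(t) u(t), J̃ is skew-symmetric, M̃ and R̃ are symmetric, and the output is invariant: g̃ᵀ Σ̃ x̃ = gᵀ Σ x for all t. -/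
open Matrix

/-!
The state equation transforms by the product rule, `d(Px)/dt = Ṗx + P(J − R)Σx + Pgu`, so
everything reduces to the algebraic identity `(A − PRPᵀ) Σ̃ P = Ṗ + P(J − R)Σ`, which holds
because `Pᵀ Σ̃ P = Σ` and `J̃ + M̃ = A`. The same congruence `Pᵀ Σ̃ P = Σ` gives the invariance
of the output.
-/

theorem inv_two_smul_sub_add_inv_two_smul_add {K M : Type*} [DivisionRing K] [NeZero (2 : K)]
    [AddCommGroup M] [Module K M] (a b : M) :
    (2⁻¹ : K) • (a - b) + (2⁻¹ : K) • (a + b) = a := by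
  rw [← smul_add, sub_add_add_cancel, ← two_smul K a, smul_smul,
    inv_mul_cancel₀ (NeZero.ne 2), one_smul]

theorem HasDerivAt.matrix_mulVec {𝕜 m n : Type*} [NontriviallyNormedField 𝕜] [Fintype m]
    [Fintype n] {P : 𝕜 → Matrix m n 𝕜} {P' : Matrix m n 𝕜} {x : 𝕜 → n → 𝕜} {x' : n → 𝕜}
    {t : 𝕜} (hP : ∀ i j, HasDerivAt (fun s => P s i j) (P' i j) t) (hx : HasDerivAt x x' t) :
    HasDerivAt (fun s => P s *ᵥ x s) (P' *ᵥ x t + P t *ᵥ x') t := by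
  refine hasDerivAt_pi.mpr fun i => ?_
  have hsum : HasDerivAt (fun s => ∑ j, P s i j * x s j)
      (∑ j, (P' i j * x t j + P t i j * x' j)) t :=
    HasDerivAt.fun_sum fun j _ => (hP i j).mul (hasDerivAt_pi.mp hx j)
  simpa only [mulVec, dotProduct, Finset.sum_add_distrib, Pi.add_apply] using hsum

namespace Matrix

variable {l m n α : Type*}

theorem transpose_smul_sub_transpose_self {R : Type*} [Monoid R] [AddCommGroup α]
    [DistribMulAction R α] (c : R) (A : Matrix n n α) :
    (c • (A - Aᵀ))ᵀ = -(c • (A - Aᵀ)) := by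
  rw [transpose_smul, transpose_sub, transpose_transpose, ← smul_neg, neg_sub]

theorem IsSymm.mul_mul_transpose [Fintype m] [CommSemiring α] {R : Matrix m m α} (hR : R.IsSymm)
    (P : Matrix n m α) : (P * R * Pᵀ).IsSymm := by
  simp only [IsSymm, transpose_mul, transpose_transpose, hR.eq, Matrix.mul_assoc]

variable [Fintype n] [DecidableEq n] [CommRing α] {P : Matrix n n α}

theorem mul_transpose_mul_inv_conj_mul (hP : IsUnit P.det) (X : Matrix l n α)
    (S : Matrix n n α) : X * Pᵀ * ((P⁻¹)ᵀ * S * P⁻¹) * P = X * S := by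
  have hPT : Pᵀ * (P⁻¹)ᵀ = 1 := by rw [← transpose_mul, nonsing_inv_mul P hP, transpose_one]
  calc X * Pᵀ * ((P⁻¹)ᵀ * S * P⁻¹) * P = X * (Pᵀ * (P⁻¹)ᵀ) * S * (P⁻¹ * P) := by
        simp only [Matrix.mul_assoc]
    _ = X * S := by rw [hPT, nonsing_inv_mul P hP, Matrix.mul_one, Matrix.mul_one]

theorem transpose_mulVec_inv_conj_mulVec [Fintype l] (hP : IsUnit P.det) (g : Matrix n l α)
    (S : Matrix n n α) (v : n → α) :
    (P * g)ᵀ *ᵥ (((P⁻¹)ᵀ * S * P⁻¹) *ᵥ (P *ᵥ v)) = gᵀ *ᵥ (S *ᵥ v) := by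
  rw [mulVec_mulVec, mulVec_mulVec, transpose_mul, mulVec_mulVec,
    mul_transpose_mul_inv_conj_mul hP]

theorem coordChange_dynamics_mul_inv_conj_mul (hP : IsUnit P.det) {S : Matrix n n α}
    (hS : IsUnit S.det) (J R P' : Matrix n n α) :
    (P * J * Pᵀ + P' * S⁻¹ * Pᵀ - P * R * Pᵀ) * ((P⁻¹)ᵀ * S * P⁻¹) * P
      = P' + P * (J - R) * S := by
  rw [sub_mul, sub_mul, add_mul, add_mul, mul_transpose_mul_inv_conj_mul hP,
    mul_transpose_mul_inv_conj_mul hP, mul_transpose_mul_inv_conj_mul hP, Matrix.mul_assoc P',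
    nonsing_inv_mul S hS, Matrix.mul_one, Matrix.mul_sub, sub_mul]
  abel

end Matrix

theorem time_varying_change_of_coordinates_general
    (n k : ℕ)
    (Sg J R : ℝ → Matrix (Fin n) (Fin n) ℝ)
    (g : ℝ → Matrix (Fin n) (Fin k) ℝ)
    (P P' : ℝ → Matrix (Fin n) (Fin n) ℝ)
    (u : ℝ → Fin k → ℝ)
    (hSgpos : ∀ t, (Sg t).PosDef)
    (hPdiff : ∀ t i j, HasDerivAt (fun s => P s i j) (P' t i j) t)
    (hPinv : ∀ t, IsUnit (P t).det)
    (hR : ∀ t, (R t)ᵀ = R t)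
    (x : ℝ → Fin n → ℝ)
    (hx : ∀ t, HasDerivAt x (((J t - R t) * Sg t) *ᵥ x t + g t *ᵥ u t) t)
    (A Jt Mt Rt Sgt : ℝ → Matrix (Fin n) (Fin n) ℝ)
    (gt : ℝ → Matrix (Fin n) (Fin k) ℝ)
    (hA : ∀ t, A t = P t * J t * (P t)ᵀ + P' t * (Sg t)⁻¹ * (P t)ᵀ)
    (hJt : ∀ t, Jt t = (2⁻¹ : ℝ) • (A t - (A t)ᵀ))
    (hMt : ∀ t, Mt t = (2⁻¹ : ℝ) • (A t + (A t)ᵀ))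
    (hgt : ∀ t, gt t = P t * g t)
    (hRt : ∀ t, Rt t = P t * R t * (P t)ᵀ)
    (hSgt : ∀ t, Sgt t = ((P t)⁻¹)ᵀ * Sg t * (P t)⁻¹) :
    (∀ t, HasDerivAt (fun s => P s *ᵥ x s)
      (((Jt t + Mt t - Rt t) * Sgt t) *ᵥ (P t *ᵥ x t) + gt t *ᵥ u t) t) ∧
    (∀ t, (Jt t)ᵀ = -(Jt t)) ∧
    (∀ t, (Mt t)ᵀ = Mt t) ∧
    (∀ t, (Rt t)ᵀ = Rt t) ∧
    (∀ t, (gt t)ᵀ *ᵥ (Sgt t *ᵥ (P t *ᵥ x t)) = (g t)ᵀ *ᵥ (Sg t *ᵥ x t)) := by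
  refine ⟨fun t => ?_, fun t => ?_, fun t => ?_, fun t => ?_, fun t => ?_⟩
  · have hSg : IsUnit (Sg t).det := (hSgpos t).det_pos.ne'.isUnit
    have hJMt : Jt t + Mt t = A t := by
      rw [hJt, hMt, inv_two_smul_sub_add_inv_two_smul_add]
    have hrhs : ((Jt t + Mt t - Rt t) * Sgt t) *ᵥ (P t *ᵥ x t) + gt t *ᵥ u t
        = P' t *ᵥ x t + P t *ᵥ (((J t - R t) * Sg t) *ᵥ x t + g t *ᵥ u t) := by
      rw [mulVec_mulVec, hJMt, hA, hRt, hSgt, coordChange_dynamics_mul_inv_conj_mul (hPinv t) hSg, hgt,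
        mulVec_add, add_mulVec, mulVec_mulVec, mulVec_mulVec, Matrix.mul_assoc, add_assoc]
    exact hrhs ▸ HasDerivAt.matrix_mulVec (hPdiff t) (hx t)
  · rw [hJt, transpose_smul_sub_transpose_self]
  · rw [hMt, ((isSymm_add_transpose_self (A t)).smul _).eq]
  · rw [hRt, (IsSymm.mul_mul_transpose (hR t) (P t)).eq]
  · rw [hgt, hSgt, transpose_mulVec_inv_conj_mulVec (hPinv t)]

/-- Time-varying change of coordinates `x̃ = P(t)x` for a linear port-Hamiltonian system
`ẋ = (J − R)Σx + gu`: with `A = PJPᵀ + ṖΣ⁻¹Pᵀ`, `J̃ = (A − Aᵀ)/2`, `M̃ = (A + Aᵀ)/2`,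
`g̃ = Pg`, `R̃ = PRPᵀ`, and `Σ̃ = P⁻ᵀΣP⁻¹`, the new state solves
`dx̃/dt = (J̃ + M̃ − R̃)Σ̃x̃ + g̃u`, `J̃` is skew-symmetric, `M̃` and `R̃` are symmetric,
and the output is invariant: `g̃ᵀΣ̃x̃ = gᵀΣx`. -/
theorem time_varying_change_of_coordinates
    (n k : ℕ)
    (Sg J R : ℝ → Matrix (Fin n) (Fin n) ℝ)
    (g : ℝ → Matrix (Fin n) (Fin k) ℝ)
    (P P' Sg' : ℝ → Matrix (Fin n) (Fin n) ℝ)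
    (u : ℝ → Fin k → ℝ)
    (hSgpos : ∀ t, (Sg t).PosDef) (hSgsym : ∀ t, (Sg t)ᵀ = Sg t)
    (hSgdiff : ∀ t i j, HasDerivAt (fun s => Sg s i j) (Sg' t i j) t)
    (hPdiff : ∀ t i j, HasDerivAt (fun s => P s i j) (P' t i j) t)
    (hPinv : ∀ t, IsUnit (P t).det)
    (hJ : ∀ t, (J t)ᵀ = -(J t)) (hR : ∀ t, (R t)ᵀ = R t)
    (hJc : ∀ i j, Continuous fun t => J t i j)
    (hRc : ∀ i j, Continuous fun t => R t i j)
    (hgc : ∀ i j, Continuous fun t => g t i j)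
    (huc : Continuous u)
    (x : ℝ → Fin n → ℝ)
    (hx : ∀ t, HasDerivAt x (((J t - R t) * Sg t) *ᵥ x t + g t *ᵥ u t) t)
    (A Jt Mt Rt Sgt : ℝ → Matrix (Fin n) (Fin n) ℝ)
    (gt : ℝ → Matrix (Fin n) (Fin k) ℝ)
    (hA : ∀ t, A t = P t * J t * (P t)ᵀ + P' t * (Sg t)⁻¹ * (P t)ᵀ)
    (hJt : ∀ t, Jt t = (2⁻¹ : ℝ) • (A t - (A t)ᵀ))
    (hMt : ∀ t, Mt t = (2⁻¹ : ℝ) • (A t + (A t)ᵀ))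
    (hgt : ∀ t, gt t = P t * g t)
    (hRt : ∀ t, Rt t = P t * R t * (P t)ᵀ)
    (hSgt : ∀ t, Sgt t = ((P t)⁻¹)ᵀ * Sg t * (P t)⁻¹) :
    (∀ t, HasDerivAt (fun s => P s *ᵥ x s)
      (((Jt t + Mt t - Rt t) * Sgt t) *ᵥ (P t *ᵥ x t) + gt t *ᵥ u t) t) ∧
    (∀ t, (Jt t)ᵀ = -(Jt t)) ∧
    (∀ t, (Mt t)ᵀ = Mt t) ∧
    (∀ t, (Rt t)ᵀ = Rt t) ∧
    (∀ t, (gt t)ᵀ *ᵥ (Sgt t *ᵥ (P t *ᵥ x t)) = (g t)ᵀ *ᵥ (Sg t *ᵥ x t)) :=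
  time_varying_change_of_coordinates_general n k Sg J R g P P' u hSgpos hPdiff hPinv hR x hx A Jt Mt
    Rt Sgt gt hA hJt hMt hgt hRt hSgt
end

section
/- Let R_ε, R₂, C, t_f > 0, and set κ = R_ε/R₂, τ₂ = R₂C, λ = (2/τ₂)√(1 + 1/κ), Λ = (√κ − √(κ+1))/(√κ + √(κ+1)), S₀ = −½(√κ − √(κ+1))². Then Λ² < 1, the denominator e^{λ(t_f−t)} − Λ² is positive for all t ≤ t_f, and the function S(t) = S₀ (e^{λ(t_f−t)} − 1)/(e^{λ(t_f−t)} − Λ²) is differentiable on (−∞, t_f] and satisfies the Riccati differential equation Ṡ = (2/τ₂)S + (1/(R_ε C))(S + ½)² with terminal condition S(t_f) = 0. -/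
/-!
With `β = 1/(R_ε C)` the Riccati equation reads `Ṡ = β (S - r₁)(S - r₂)`, whose equilibria
`r₁ = S₀ = -½(√κ - √(κ+1))²` and `r₂ = -½(√κ + √(κ+1))²` have product `¼` and sum `-(1 + 2κ)`.
For any such equation, `S = r₁ (E - 1)/(E - L)` with `E = e^{β(r₁ - r₂)(t_f - t)}` and `r₁ = L r₂`
is a solution vanishing at `t_f`, because `S - r₁ = r₁ (L - 1)/(E - L)` and
`S - r₂ = (r₁ - r₂) E/(E - L)`. Here `L = Λ²` and `β (r₁ - r₂) = λ`.
-/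

open Real

theorem hasDerivAt_of_riccati_roots {β μ r₁ r₂ L tf t : ℝ} (f : ℝ → ℝ)
    (hf : ∀ u, f u = r₁ * (rexp (μ * (tf - u)) - 1) / (rexp (μ * (tf - u)) - L))
    (hμ : μ = β * (r₁ - r₂)) (hL : r₁ = L * r₂) (hE : rexp (μ * (tf - t)) - L ≠ 0) :
    HasDerivAt f (β * (f t - r₁) * (f t - r₂)) t := by
  subst hμ
  have hexp : HasDerivAt (fun u => rexp (β * (r₁ - r₂) * (tf - u)))
      (rexp (β * (r₁ - r₂) * (tf - t)) * (β * (r₁ - r₂) * -1)) t :=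
    (((hasDerivAt_id t).const_sub tf).const_mul _).exp
  have hquot := ((hexp.sub_const 1).const_mul r₁).div (hexp.sub_const L) hE
  rw [show f = _ from funext hf]
  refine hquot.congr_deriv ?_
  beta_reduce
  generalize rexp (β * (r₁ - r₂) * (tf - t)) = E at hE ⊢
  field_simp
  linear_combination (β * r₁ * (L - 1)) * hL

theorem sq_sub_div_add_lt_one {a b : ℝ} (ha : 0 < a) (hb : 0 < b) :
    ((a - b) / (a + b)) ^ 2 < 1 := by
  rw [div_pow, div_lt_one (by positivity)]
  nlinarith [mul_pos ha hb]

theorem riccati_explicit_solution_general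
    (Rε R₂ C tf : ℝ) (hRε : 0 < Rε) (hR₂ : 0 < R₂) (hC : 0 < C)
    (κ τ₂ lam Lam S₀ : ℝ)
    (hκ : κ = Rε / R₂) (hτ₂ : τ₂ = R₂ * C)
    (hlam : lam = (2 / τ₂) * Real.sqrt (1 + 1 / κ))
    (hLam : Lam = (Real.sqrt κ - Real.sqrt (κ + 1)) / (Real.sqrt κ + Real.sqrt (κ + 1)))
    (hS₀ : S₀ = -(1/2) * (Real.sqrt κ - Real.sqrt (κ + 1))^2)
    (S : ℝ → ℝ)
    (hS : ∀ t, S t = S₀ * (Real.exp (lam * (tf - t)) - 1) / (Real.exp (lam * (tf - t)) - Lam^2)) :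
    Lam^2 < 1 ∧
    (∀ t ≤ tf, Real.exp (lam * (tf - t)) - Lam^2 > 0) ∧
    S tf = 0 ∧
    (∀ t ≤ tf, HasDerivAt S ((2 / τ₂) * S t + (1 / (Rε * C)) * (S t + 1/2)^2) t) := by
  have hκ0 : 0 < κ := hκ ▸ div_pos hRε hR₂
  have hτ₂0 : 0 < τ₂ := hτ₂ ▸ mul_pos hR₂ hC
  set a := √κ with ha_def
  set b := √(κ + 1) with hb_def
  have ha : 0 < a := sqrt_pos.2 hκ0
  have hb : 0 < b := sqrt_pos.2 (by linarith)
  have ha2 : a ^ 2 = κ := sq_sqrt hκ0.le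
  have hb2 : b ^ 2 = a ^ 2 + 1 := by rw [ha2]; exact sq_sqrt (by linarith)
  have hRC : Rε * C = a ^ 2 * τ₂ := by rw [ha2, hκ, hτ₂]; field_simp
  have hLam1 : Lam ^ 2 < 1 := hLam ▸ sq_sub_div_add_lt_one ha hb
  have hlam0 : 0 ≤ lam := hlam ▸ by positivity
  have hden (t : ℝ) (ht : t ≤ tf) : rexp (lam * (tf - t)) - Lam ^ 2 > 0 := by
    linarith [one_le_exp (mul_nonneg hlam0 (sub_nonneg.2 ht))]
  refine ⟨hLam1, hden, by simp [hS], fun t ht => ?_⟩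
  have hlam' : lam = 1 / (Rε * C) * (S₀ - -(1 / 2) * (a + b) ^ 2) := by
    rw [hlam, hRC, hS₀, one_add_div hκ0.ne', sqrt_div' _ hκ0.le, ← ha_def, ← hb_def]
    field_simp
    ring
  have hroots : S₀ = Lam ^ 2 * (-(1 / 2) * (a + b) ^ 2) := by
    rw [hS₀, hLam]
    field_simp
  have hrhs : (2 / τ₂) * S t + 1 / (Rε * C) * (S t + 1 / 2) ^ 2
      = 1 / (Rε * C) * (S t - S₀) * (S t - -(1 / 2) * (a + b) ^ 2) := by
    rw [hRC, hS₀]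
    field_simp
    linear_combination (-4 * S t - b ^ 2 + a ^ 2 - 1) * hb2
  rw [hrhs]
  exact hasDerivAt_of_riccati_roots S hS hlam' hroots (hden t ht).ne'

/-- The explicit function `S(t) = S₀(e^{λ(t_f−t)} − 1)/(e^{λ(t_f−t)} − Λ²)` solves the control
Riccati equation `Ṡ = (2/τ₂)S + (1/(R_ε C))(S + ½)²` with terminal condition `S(t_f) = 0`;
moreover `Λ² < 1` and the denominator is positive for `t ≤ t_f`. -/
theorem riccati_explicit_solution
    (Rε R₂ C tf : ℝ) (hRε : 0 < Rε) (hR₂ : 0 < R₂) (hC : 0 < C) (htf : 0 < tf)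
    (κ τ₂ lam Lam S₀ : ℝ)
    (hκ : κ = Rε / R₂) (hτ₂ : τ₂ = R₂ * C)
    (hlam : lam = (2 / τ₂) * Real.sqrt (1 + 1 / κ))
    (hLam : Lam = (Real.sqrt κ - Real.sqrt (κ + 1)) / (Real.sqrt κ + Real.sqrt (κ + 1)))
    (hS₀ : S₀ = -(1/2) * (Real.sqrt κ - Real.sqrt (κ + 1))^2)
    (S : ℝ → ℝ)
    (hS : ∀ t, S t = S₀ * (Real.exp (lam * (tf - t)) - 1) / (Real.exp (lam * (tf - t)) - Lam^2)) :
    Lam^2 < 1 ∧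
    (∀ t ≤ tf, Real.exp (lam * (tf - t)) - Lam^2 > 0) ∧
    S tf = 0 ∧
    (∀ t ≤ tf, HasDerivAt S ((2 / τ₂) * S t + (1 / (Rε * C)) * (S t + 1/2)^2) t) :=
  riccati_explicit_solution_general Rε R₂ C tf hRε hR₂ hC κ τ₂ lam Lam S₀ hκ hτ₂ hlam hLam hS₀ S hS
end

section
/- Let R_ε, R₂, C, T > 0, κ = R_ε/R₂, τ₂ = R₂C, λ = (2/τ₂)√(1 + 1/κ), Λ = (√κ − √(κ+1))/(√κ + √(κ+1)), S₀ = −½(√κ − √(κ+1))², and for each t_f > 0 define S_{t_f}(t) = S₀ (e^{λ(t_f−t)} − 1)/(e^{λ(t_f−t)} − Λ²) and the optimal extracted work W*(t_f) = −S_{t_f}(0)·T − (2T/τ₂) ∫₀^{t_f} S_{t_f}(t) dt. Then the asymptotic extracted power satisfies lim_{t_f → ∞} W*(t_f)/t_f = −2TS₀/τ₂ = (T/τ₂)(√(κ+1) − √κ)². -/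
open Filter intervalIntegral

/-!
With `a = Λ²`, the closed-form solution is `S_{t_f}(t) = S₀ g(λ(t_f − t))` where
`g(u) = (eᵘ − 1)/(eᵘ − a)` tends to `1`. Since `0 < a < 1`, `g` has on `[0, ∞)` the explicit
primitive `u − ((1 − a)/a) log(1 − a e⁻ᵘ) = u + o(1)`, so `∫₀^{t_f} S_{t_f} = S₀ t_f + O(1)`,
while the boundary term `S_{t_f}(0)` stays bounded. Dividing by `t_f` leaves `−2TS₀/τ₂`.
-/

open Real Topology Set

noncomputable def riccatiProfile (a u : ℝ) : ℝ := (exp u - 1) / (exp u - a)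

noncomputable def riccatiProfilePrimitive (a u : ℝ) : ℝ :=
  u - (1 - a) / a * log (1 - a * exp (-u))

section

variable {a : ℝ}

lemma one_sub_mul_exp_neg_pos (ha : a < 1) {u : ℝ} (hu : 0 ≤ u) : 0 < 1 - a * exp (-u) := by
  have h0 := exp_pos (-u)
  have h1 : exp (-u) ≤ 1 := exp_le_one_iff.2 (neg_nonpos.2 hu)
  nlinarith

lemma exp_sub_pos (ha : a < 1) {u : ℝ} (hu : 0 ≤ u) : 0 < exp u - a := by
  linarith [one_le_exp hu]

lemma hasDerivAt_riccatiProfilePrimitive (ha0 : a ≠ 0) (ha1 : a < 1) {u : ℝ} (hu : 0 ≤ u) :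
    HasDerivAt (riccatiProfilePrimitive a) (riccatiProfile a u) u := by
  have hlog := (((hasDerivAt_neg u).exp.const_mul a).const_sub 1).log
    (one_sub_mul_exp_neg_pos ha1 hu).ne'
  refine ((hasDerivAt_id' u).sub (hlog.const_mul ((1 - a) / a))).congr_deriv ?_
  have h1 := exp_sub_pos ha1 hu
  have h2 := one_sub_mul_exp_neg_pos ha1 hu
  rw [riccatiProfile, exp_neg] at *
  field_simp
  ring

lemma continuousOn_riccatiProfile (ha : a < 1) : ContinuousOn (riccatiProfile a) (Ici 0) :=
  ((continuous_exp.sub continuous_const).continuousOn).div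
    ((continuous_exp.sub continuous_const).continuousOn) fun _ hu => (exp_sub_pos ha hu).ne'

lemma integral_riccatiProfile (ha0 : a ≠ 0) (ha1 : a < 1) {x : ℝ} (hx : 0 ≤ x) :
    ∫ u in 0..x, riccatiProfile a u =
      riccatiProfilePrimitive a x - riccatiProfilePrimitive a 0 := by
  have hsub : uIcc 0 x ⊆ Ici 0 := by rw [uIcc_of_le hx]; exact Icc_subset_Ici_self
  exact integral_eq_sub_of_hasDerivAt
    (fun u hu => hasDerivAt_riccatiProfilePrimitive ha0 ha1 (hsub hu))
    ((continuousOn_riccatiProfile ha1).mono hsub).intervalIntegrable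

lemma tendsto_riccatiProfilePrimitive_sub_self :
    Tendsto (fun x => riccatiProfilePrimitive a x - x) atTop (𝓝 0) := by
  have hlog : Tendsto (fun x => log (1 - a * exp (-x))) atTop (𝓝 0) := by
    simpa using ((tendsto_exp_neg_atTop_nhds_zero.const_mul a).const_sub 1).log (by simp)
  simpa [riccatiProfilePrimitive] using hlog.const_mul (-((1 - a) / a))

lemma tendsto_riccatiProfile_atTop : Tendsto (riccatiProfile a) atTop (𝓝 1) := by
  have h := (tendsto_exp_neg_atTop_nhds_zero.const_sub 1).div
    ((tendsto_exp_neg_atTop_nhds_zero.const_mul a).const_sub 1) (by simp)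
  convert h using 1
  · funext u
    rw [Pi.div_apply, riccatiProfile, ← mul_div_mul_right _ _ (exp_pos (-u)).ne']
    simp only [sub_mul, ← exp_add, add_neg_cancel, exp_zero, one_mul]
  · simp

lemma tendsto_integral_riccatiProfile_div_self (ha0 : a ≠ 0) (ha1 : a < 1) :
    Tendsto (fun x => (∫ u in 0..x, riccatiProfile a u) / x) atTop (𝓝 1) := by
  have h := tendsto_const_nhds (x := (1 : ℝ)).add
    (((tendsto_riccatiProfilePrimitive_sub_self (a := a)).sub_const
      (riccatiProfilePrimitive a 0)).mul tendsto_inv_atTop_zero)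
  rw [zero_sub, mul_zero, add_zero] at h
  refine h.congr' ?_
  filter_upwards [eventually_gt_atTop 0] with x hx
  rw [integral_riccatiProfile ha0 ha1 hx.le]
  field_simp
  ring

variable {lam : ℝ}

lemma tendsto_riccatiProfile_mul_div (hlam : 0 < lam) :
    Tendsto (fun x => riccatiProfile a (lam * x) / x) atTop (𝓝 0) := by
  simpa [div_eq_mul_inv] using
    (tendsto_riccatiProfile_atTop.comp (tendsto_id.const_mul_atTop hlam)).mul tendsto_inv_atTop_zero

lemma tendsto_integral_riccatiProfile_mul_sub_div (ha0 : a ≠ 0) (ha1 : a < 1) (hlam : 0 < lam) :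
    Tendsto (fun x => (∫ t in 0..x, riccatiProfile a (lam * (x - t))) / x) atTop (𝓝 1) := by
  have h := (tendsto_integral_riccatiProfile_div_self ha0 ha1).comp
    (tendsto_id.const_mul_atTop hlam)
  refine h.congr fun x => ?_
  simp only [Function.comp_apply, id, mul_sub]
  rw [integral_comp_sub_mul _ hlam.ne', mul_zero, sub_zero, sub_self, smul_eq_mul,
    div_mul_eq_div_div, inv_mul_eq_div]

end

lemma sq_sub_div_add_mem_Ioo {p q : ℝ} (hp : 0 < p) (hpq : p < q) :
    ((p - q) / (p + q)) ^ 2 ∈ Ioo 0 1 := by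
  have hsum : 0 < p + q := by linarith
  rw [div_pow, mem_Ioo, lt_div_iff₀ (by positivity), div_lt_one (by positivity)]
  constructor <;> nlinarith

theorem asymptotic_extracted_power_general
    (Rε R₂ C T : ℝ) (hRε : 0 < Rε) (hR₂ : 0 < R₂) (hC : 0 < C)
    (κ τ₂ lam Lam S₀ : ℝ)
    (hκ : κ = Rε / R₂) (hτ₂ : τ₂ = R₂ * C)
    (hlam : lam = (2 / τ₂) * Real.sqrt (1 + 1 / κ))
    (hLam : Lam = (Real.sqrt κ - Real.sqrt (κ + 1)) / (Real.sqrt κ + Real.sqrt (κ + 1)))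
    (hS₀ : S₀ = -(1/2) * (Real.sqrt κ - Real.sqrt (κ + 1))^2)
    (S : ℝ → ℝ → ℝ)
    (hS : ∀ tf t, S tf t
      = S₀ * (Real.exp (lam * (tf - t)) - 1) / (Real.exp (lam * (tf - t)) - Lam^2))
    (W : ℝ → ℝ)
    (hW : ∀ tf, W tf = -(S tf 0) * T - (2 * T / τ₂) * ∫ t in (0:ℝ)..tf, S tf t) :
    Tendsto (fun tf => W tf / tf) atTop (nhds (-(2 * T * S₀) / τ₂)) ∧
    -(2 * T * S₀) / τ₂ = (T / τ₂) * (Real.sqrt (κ + 1) - Real.sqrt κ)^2 := by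
  have hκ0 : 0 < κ := hκ ▸ div_pos hRε hR₂
  have hlam0 : 0 < lam := by
    rw [hlam, hτ₂]
    have : 0 < Real.sqrt (1 + 1 / κ) := Real.sqrt_pos.2 (by positivity)
    positivity
  obtain ⟨ha0, ha1⟩ : Lam ^ 2 ∈ Ioo 0 1 := hLam ▸
    sq_sub_div_add_mem_Ioo (Real.sqrt_pos.2 hκ0) (Real.sqrt_lt_sqrt hκ0.le (lt_add_one κ))
  have hS' : ∀ tf t, S tf t = S₀ * riccatiProfile (Lam ^ 2) (lam * (tf - t)) := fun tf t => by
    rw [hS, mul_div_assoc, riccatiProfile]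
  have hboundary : Tendsto (fun tf => S tf 0 / tf) atTop (𝓝 (S₀ * 0)) := by
    simpa only [hS', sub_zero, mul_div_assoc] using
      (tendsto_riccatiProfile_mul_div hlam0).const_mul S₀
  have hbulk : Tendsto (fun tf => (∫ t in (0:ℝ)..tf, S tf t) / tf) atTop (𝓝 (S₀ * 1)) := by
    simpa only [hS', integral_const_mul, mul_div_assoc] using
      (tendsto_integral_riccatiProfile_mul_sub_div ha0.ne' ha1 hlam0).const_mul S₀
  refine ⟨?_, by rw [hS₀]; ring⟩
  have h := (hboundary.neg.mul_const T).sub (hbulk.const_mul (2 * T / τ₂))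
  rw [mul_zero, neg_zero, zero_mul, zero_sub, mul_one] at h
  convert h using 2 with tf
  · rw [hW]; ring
  · ring

/-- The optimal extracted work `W*(t_f) = −S_{t_f}(0)T − (2T/τ₂)∫₀^{t_f} S_{t_f}(t) dt` satisfies
`lim_{t_f→∞} W*(t_f)/t_f = −2TS₀/τ₂ = (T/τ₂)(√(κ+1) − √κ)²`. -/
theorem asymptotic_extracted_power
    (Rε R₂ C T : ℝ) (hRε : 0 < Rε) (hR₂ : 0 < R₂) (hC : 0 < C) (hT : 0 < T)
    (κ τ₂ lam Lam S₀ : ℝ)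
    (hκ : κ = Rε / R₂) (hτ₂ : τ₂ = R₂ * C)
    (hlam : lam = (2 / τ₂) * Real.sqrt (1 + 1 / κ))
    (hLam : Lam = (Real.sqrt κ - Real.sqrt (κ + 1)) / (Real.sqrt κ + Real.sqrt (κ + 1)))
    (hS₀ : S₀ = -(1/2) * (Real.sqrt κ - Real.sqrt (κ + 1))^2)
    (S : ℝ → ℝ → ℝ)
    (hS : ∀ tf t, S tf t
      = S₀ * (Real.exp (lam * (tf - t)) - 1) / (Real.exp (lam * (tf - t)) - Lam^2))
    (W : ℝ → ℝ)
    (hW : ∀ tf, W tf = -(S tf 0) * T - (2 * T / τ₂) * ∫ t in (0:ℝ)..tf, S tf t) :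
    Tendsto (fun tf => W tf / tf) atTop (nhds (-(2 * T * S₀) / τ₂)) ∧
    -(2 * T * S₀) / τ₂ = (T / τ₂) * (Real.sqrt (κ + 1) - Real.sqrt κ)^2 :=
  asymptotic_extracted_power_general Rε R₂ C T hRε hR₂ hC κ τ₂ lam Lam S₀ hκ hτ₂ hlam hLam hS₀ S hS
    W hW
end

section
/- Let T_hot, T_cold, τ₂, t_hot, t_cold, τ₁^hot > 0 and τ₁^cold > τ₂ with the cycle condition t_hot/τ₁^hot = t_cold/τ₁^cold. Define the effective temperatures T'_hot = T_hot/(1 + τ₂/τ₁^hot) and T'_cold = T_cold/(1 − τ₂/τ₁^cold), and the heats Q_hot = T'_hot · t_hot/τ₁^hot and Q_cold = −T'_cold · t_cold/τ₁^cold. Then the efficiency of the cycle satisfies η := (Q_hot + Q_cold)/Q_hot = 1 − T'_cold/T'_hot = 1 − (T_cold/T_hot) · (1 + τ₂/τ₁^hot)/(1 − τ₂/τ₁^cold). -/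
/-! By the cycle condition both isothermal heats are the effective temperature times the same
factor `t/τ₁`, which cancels in the efficiency just as the entropy does in a reversible Carnot
cycle; the second form is a rearrangement of the quotient of effective temperatures. -/

theorem carnot_efficiency_eq {K : Type*} [Field K] {Thot Tcold σ : K}
    (hThot : Thot ≠ 0) (hσ : σ ≠ 0) :
    (Thot * σ + -(Tcold * σ)) / (Thot * σ) = 1 - Tcold / Thot := by
  field_simp
  ring

theorem finite_time_carnot_efficiency_general
    (Thot Tcold τ₂ thot tcold τ₁hot τ₁cold : ℝ)
    (hThot : 0 < Thot) (hτ₂ : 0 < τ₂)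
    (hthot : 0 < thot) (hτ₁hot : 0 < τ₁hot)
    (hcyc : thot / τ₁hot = tcold / τ₁cold)
    (T'hot T'cold Qhot Qcold : ℝ)
    (hT'hot : T'hot = Thot / (1 + τ₂ / τ₁hot))
    (hT'cold : T'cold = Tcold / (1 - τ₂ / τ₁cold))
    (hQhot : Qhot = T'hot * (thot / τ₁hot))
    (hQcold : Qcold = -(T'cold * (tcold / τ₁cold))) :
    (Qhot + Qcold) / Qhot = 1 - T'cold / T'hot ∧
    (Qhot + Qcold) / Qhot
      = 1 - (Tcold / Thot) * ((1 + τ₂ / τ₁hot) / (1 - τ₂ / τ₁cold)) := by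
  have hT'hot_ne : T'hot ≠ 0 := by rw [hT'hot]; positivity
  have hη : (Qhot + Qcold) / Qhot = 1 - T'cold / T'hot := by
    rw [hQhot, hQcold, ← hcyc]
    exact carnot_efficiency_eq hT'hot_ne (by positivity)
  refine ⟨hη, ?_⟩
  rw [hη, hT'hot, hT'cold, div_div_div_comm, div_div_eq_mul_div, mul_div_assoc]

/-- Efficiency of the finite-time Carnot cycle: with effective temperatures
`T'_hot = T_hot/(1 + τ₂/τ₁ʰᵒᵗ)`, `T'_cold = T_cold/(1 − τ₂/τ₁ᶜᵒˡᵈ)`, heats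
`Q_hot = T'_hot t_hot/τ₁ʰᵒᵗ`, `Q_cold = −T'_cold t_cold/τ₁ᶜᵒˡᵈ`, and the cycle condition
`t_hot/τ₁ʰᵒᵗ = t_cold/τ₁ᶜᵒˡᵈ`, the efficiency `η = (Q_hot + Q_cold)/Q_hot` equals
`1 − T'_cold/T'_hot = 1 − (T_cold/T_hot)(1 + τ₂/τ₁ʰᵒᵗ)/(1 − τ₂/τ₁ᶜᵒˡᵈ)`. -/
theorem finite_time_carnot_efficiency
    (Thot Tcold τ₂ thot tcold τ₁hot τ₁cold : ℝ)
    (hThot : 0 < Thot) (hTcold : 0 < Tcold) (hτ₂ : 0 < τ₂)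
    (hthot : 0 < thot) (htcold : 0 < tcold) (hτ₁hot : 0 < τ₁hot)
    (hτ₁cold : τ₁cold > τ₂)
    (hcyc : thot / τ₁hot = tcold / τ₁cold)
    (T'hot T'cold Qhot Qcold : ℝ)
    (hT'hot : T'hot = Thot / (1 + τ₂ / τ₁hot))
    (hT'cold : T'cold = Tcold / (1 - τ₂ / τ₁cold))
    (hQhot : Qhot = T'hot * (thot / τ₁hot))
    (hQcold : Qcold = -(T'cold * (tcold / τ₁cold))) :
    (Qhot + Qcold) / Qhot = 1 - T'cold / T'hot ∧
    (Qhot + Qcold) / Qhot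
      = 1 - (Tcold / Thot) * ((1 + τ₂ / τ₁hot) / (1 - τ₂ / τ₁cold)) :=
  finite_time_carnot_efficiency_general Thot Tcold τ₂ thot tcold τ₁hot τ₁cold hThot hτ₂ hthot hτ₁hot
    hcyc T'hot T'cold Qhot Qcold hT'hot hT'cold hQhot hQcold
end

section
/- Let T_hot > T_cold > 0 and τ₂ > 0. For τ₁^hot > 0 and τ₁^cold > τ₂, define the average mechanical power w̄(τ₁^hot, τ₁^cold) = (1/(τ₁^hot + τ₁^cold)) · ( T_hot/(1 + τ₂/τ₁^hot) − T_cold/(1 − τ₂/τ₁^cold) ). Then w̄(τ₁^hot, τ₁^cold) ≤ (√T_hot − √T_cold)²/(4τ₂) for all admissible (τ₁^hot, τ₁^cold), and equality holds at τ₁^hot = τ₁^cold = τ₂ · (√T_hot + √T_cold)/(√T_hot − √T_cold); i.e., the maximum power of the finite-time Carnot cycle is the Orlov–Berry value (√T_hot − √T_cold)²/(4τ₂). -/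
/-!
Writing `T_hot = s²`, `T_cold = t²`, `x = τ₁ʰᵒᵗ + τ₂`, `y = τ₁ᶜᵒˡᵈ - τ₂` and `L = x + y`, the power is
`(s² - t² - τ₂ (s²/x + t²/y)) / L`. Sedrakyan's inequality `s²/x + t²/y ≥ (s + t)²/L` bounds it by
`u (s - t) - τ₂ u²` with `u = (s + t)/L`, a concave quadratic in `u` whose maximum is
`(s - t)²/(4τ₂)`, attained at `u = (s - t)/(2τ₂)`, i.e. at `τ₁ʰᵒᵗ = τ₁ᶜᵒˡᵈ = τ₂ (s + t)/(s - t)`.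
-/

open Real

noncomputable def carnotPower (Thot Tcold τ₂ τ₁hot τ₁cold : ℝ) : ℝ :=
  (1 / (τ₁hot + τ₁cold)) * (Thot / (1 + τ₂ / τ₁hot) - Tcold / (1 - τ₂ / τ₁cold))

theorem carnotPower_eq {Thot Tcold τ₂ a b : ℝ} (ha : a ≠ 0) (haτ : a + τ₂ ≠ 0) (hb : b ≠ 0)
    (hbτ : b - τ₂ ≠ 0) :
    carnotPower Thot Tcold τ₂ a b
      = (Thot - Tcold - τ₂ * (Thot / (a + τ₂) + Tcold / (b - τ₂))) / (a + b) := by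
  unfold carnotPower
  field_simp
  ring

theorem sq_add_div_add_le_div_add_div {s t x y : ℝ} (hx : 0 < x) (hy : 0 < y) :
    (s + t) ^ 2 / (x + y) ≤ s ^ 2 / x + t ^ 2 / y := by
  simpa using Finset.sq_sum_div_le_sum_sq_div Finset.univ ![s, t] (g := ![x, y])
    (by simp [Fin.forall_fin_two, hx, hy])

theorem mul_sub_mul_sq_le_sq_div {d τ u : ℝ} (hτ : 0 < τ) :
    u * d - τ * u ^ 2 ≤ d ^ 2 / (4 * τ) := by
  rw [le_div_iff₀ (by positivity)]
  nlinarith [sq_nonneg (2 * τ * u - d)]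

theorem carnotPower_le {s t τ₂ a b : ℝ} (hτ₂ : 0 < τ₂) (ha : 0 < a) (hb : τ₂ < b) :
    carnotPower (s ^ 2) (t ^ 2) τ₂ a b ≤ (s - t) ^ 2 / (4 * τ₂) := by
  have hx : 0 < a + τ₂ := by linarith
  have hy : 0 < b - τ₂ := by linarith
  have hL : 0 < a + b := by linarith
  have sedrakyan : (s + t) ^ 2 / (a + b) ≤ s ^ 2 / (a + τ₂) + t ^ 2 / (b - τ₂) := by
    simpa using sq_add_div_add_le_div_add_div (s := s) (t := t) hx hy
  calc carnotPower (s ^ 2) (t ^ 2) τ₂ a b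
      = (s ^ 2 - t ^ 2 - τ₂ * (s ^ 2 / (a + τ₂) + t ^ 2 / (b - τ₂))) / (a + b) :=
        carnotPower_eq ha.ne' hx.ne' (by linarith) hy.ne'
    _ ≤ (s ^ 2 - t ^ 2 - τ₂ * ((s + t) ^ 2 / (a + b))) / (a + b) := by gcongr
    _ = (s + t) / (a + b) * (s - t) - τ₂ * ((s + t) / (a + b)) ^ 2 := by
        field_simp
        ring
    _ ≤ (s - t) ^ 2 / (4 * τ₂) := mul_sub_mul_sq_le_sq_div hτ₂

theorem carnotPower_optimum {s t τ₂ : ℝ} (hτ₂ : τ₂ ≠ 0) (ht : 0 < t) (hts : t < s) :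
    carnotPower (s ^ 2) (t ^ 2) τ₂ (τ₂ * (s + t) / (s - t)) (τ₂ * (s + t) / (s - t))
      = (s - t) ^ 2 / (4 * τ₂) := by
  have hs : 0 < s := ht.trans hts
  have hst : s - t ≠ 0 := (sub_pos.mpr hts).ne'
  have hsum : s + t ≠ 0 := by positivity
  have hot : 1 + τ₂ / (τ₂ * (s + t) / (s - t)) = 2 * s / (s + t) := by
    field_simp
    ring
  have cold : 1 - τ₂ / (τ₂ * (s + t) / (s - t)) = 2 * t / (s + t) := by
    field_simp
    ring
  unfold carnotPower
  rw [hot, cold]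
  field_simp
  ring

/-- The average mechanical power
`w̄(τ₁ʰᵒᵗ, τ₁ᶜᵒˡᵈ) = (T_hot/(1 + τ₂/τ₁ʰᵒᵗ) − T_cold/(1 − τ₂/τ₁ᶜᵒˡᵈ))/(τ₁ʰᵒᵗ + τ₁ᶜᵒˡᵈ)` of the
finite-time Carnot cycle is bounded by the Orlov–Berry value `(√T_hot − √T_cold)²/(4τ₂)`, with
equality at `τ₁ʰᵒᵗ = τ₁ᶜᵒˡᵈ = τ₂(√T_hot + √T_cold)/(√T_hot − √T_cold)`. -/
theorem maximum_power_orlov_berry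
    (Thot Tcold τ₂ : ℝ) (hT : Thot > Tcold) (hTc : Tcold > 0) (hτ₂ : τ₂ > 0)
    (w : ℝ → ℝ → ℝ)
    (hw : ∀ τ₁hot τ₁cold, w τ₁hot τ₁cold
      = (1 / (τ₁hot + τ₁cold)) *
        (Thot / (1 + τ₂ / τ₁hot) - Tcold / (1 - τ₂ / τ₁cold))) :
    (∀ τ₁hot > 0, ∀ τ₁cold > τ₂,
      w τ₁hot τ₁cold ≤ (Real.sqrt Thot - Real.sqrt Tcold)^2 / (4 * τ₂)) ∧
    w (τ₂ * (Real.sqrt Thot + Real.sqrt Tcold) / (Real.sqrt Thot - Real.sqrt Tcold))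
      (τ₂ * (Real.sqrt Thot + Real.sqrt Tcold) / (Real.sqrt Thot - Real.sqrt Tcold))
      = (Real.sqrt Thot - Real.sqrt Tcold)^2 / (4 * τ₂) := by
  obtain ⟨s, hs, rfl⟩ : ∃ s, 0 ≤ s ∧ Thot = s ^ 2 :=
    ⟨√Thot, sqrt_nonneg _, (sq_sqrt (hTc.trans hT).le).symm⟩
  obtain ⟨t, ht, rfl⟩ : ∃ t, 0 ≤ t ∧ Tcold = t ^ 2 := ⟨√Tcold, sqrt_nonneg _, (sq_sqrt hTc.le).symm⟩
  rw [sqrt_sq hs, sqrt_sq ht]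
  have hts : t < s := lt_of_pow_lt_pow_left₀ 2 hs hT
  have ht0 : 0 < t := ht.lt_of_ne' (by rintro rfl; simp at hTc)
  exact ⟨fun a ha b hb => hw a b ▸ carnotPower_le hτ₂ ha hb,
    hw _ _ ▸ carnotPower_optimum hτ₂.ne' ht0 hts⟩
end

section
/- Let T_hot > T_cold > 0 and τ₂ > 0, and set τ₁^hot = τ₁^cold = τ₂ · (√T_hot + √T_cold)/(√T_hot − √T_cold) (the maximum-power operating point, which satisfies τ₁^cold > τ₂). Then the efficiency η = 1 − (T_cold/T_hot) · (1 + τ₂/τ₁^hot)/(1 − τ₂/τ₁^cold) at this operating point equals the Chambadal–Novikov efficiency: η = 1 − √(T_cold/T_hot). -/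
/-! At the maximum-power point the ratio `τ₂/τ₁` is the Möbius image `(s - c)/(s + c)` of
`s = √T_hot`, `c = √T_cold`, and `r ↦ (1 + r)/(1 - r)` inverts it to `s/c`. The Carnot factor
`T_cold/T_hot = c²/s²` times `s/c` is then `c/s = √(T_cold/T_hot)`. -/

namespace FiniteTimeCarnot

lemma one_lt_add_div_sub {s c : ℝ} (hc : 0 < c) (hcs : c < s) : 1 < (s + c) / (s - c) := by
  rw [one_lt_div (sub_pos.mpr hcs)]
  linarith

lemma one_add_div_div_one_sub_div_of_eq {τ₁ τ₂ s c : ℝ} (hτ₂ : τ₂ ≠ 0)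
    (hsc : s - c ≠ 0) (hs_add_c : s + c ≠ 0) (hτ₁ : τ₁ = τ₂ * (s + c) / (s - c)) :
    (1 + τ₂ / τ₁) / (1 - τ₂ / τ₁) = s / c := by
  have hratio : τ₂ / τ₁ = (s - c) / (s + c) := by
    rw [hτ₁]
    field_simp
  have hnum : 1 + (s - c) / (s + c) = 2 * s / (s + c) := by field_simp; ring
  have hden : 1 - (s - c) / (s + c) = 2 * c / (s + c) := by field_simp; ring
  rw [hratio, hnum, hden, div_div_div_cancel_right₀ hs_add_c, mul_div_mul_left _ _ two_ne_zero]

lemma div_mul_sqrt_div_sqrt {x y : ℝ} (hx : 0 ≤ x) (hy : 0 ≤ y) :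
    x / y * (√y / √x) = √(x / y) := by
  rcases hx.eq_or_lt with rfl | hx
  · simp
  rcases hy.eq_or_lt with rfl | hy
  · simp
  have hsx : 0 < √x := Real.sqrt_pos.mpr hx
  have hsy : 0 < √y := Real.sqrt_pos.mpr hy
  rw [Real.sqrt_div' x hy.le]
  nth_rw 1 [← Real.mul_self_sqrt hx.le, ← Real.mul_self_sqrt hy.le]
  field_simp

end FiniteTimeCarnot

open FiniteTimeCarnot in
/-- At the maximum-power operating point `τ₁ʰᵒᵗ = τ₁ᶜᵒˡᵈ = τ₂(√T_hot + √T_cold)/(√T_hot − √T_cold)`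
(which is admissible, i.e. `τ₁ > τ₂`), the finite-time Carnot cycle efficiency
`η = 1 − (T_cold/T_hot)(1 + τ₂/τ₁)/(1 − τ₂/τ₁)` equals the Chambadal–Novikov efficiency
`1 − √(T_cold/T_hot)`. -/
theorem chambadal_novikov_efficiency
    (Thot Tcold τ₂ : ℝ) (hT : Thot > Tcold) (hTc : Tcold > 0) (hτ₂ : τ₂ > 0)
    (τ₁ : ℝ)
    (hτ₁ : τ₁ = τ₂ * (Real.sqrt Thot + Real.sqrt Tcold) / (Real.sqrt Thot - Real.sqrt Tcold)) :
    τ₁ > τ₂ ∧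
    1 - (Tcold / Thot) * ((1 + τ₂ / τ₁) / (1 - τ₂ / τ₁))
      = 1 - Real.sqrt (Tcold / Thot) := by
  have hc : 0 < √Tcold := Real.sqrt_pos.mpr hTc
  have hcs : √Tcold < √Thot := Real.sqrt_lt_sqrt hTc.le hT
  refine ⟨?_, ?_⟩
  · rw [hτ₁, mul_div_assoc]
    exact lt_mul_of_one_lt_right hτ₂ (one_lt_add_div_sub hc hcs)
  · rw [one_add_div_div_one_sub_div_of_eq hτ₂.ne' (by linarith) (by linarith) hτ₁,
      div_mul_sqrt_div_sqrt hTc.le (hTc.trans hT).le]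
end
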